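/- arXiv:1404.7475 — 3 statements merged into one kernel-verified Lean document; each statement's English description precedes it below -/
import Mathlib

section
/- Let φ : R → S be a formally étale homomorphism of commutative k-algebras. Then every e-dimensional HS-derivation D : R → R⟦X_1,…,X_e⟧ on R over k extends uniquely to S: there is exactly one e-dimensional HS-derivation D' : S → S⟦X_1,…,X_e⟧ on S over k such that D' ∘ φ equals the composite of D with the map R⟦X_1,…,X_e⟧ → S⟦X_1,…,X_e⟧ applying φ to each coefficient. -/
open scoped TensorProduct

noncomputable section

/-- The total degree `|i| = i 1 + … + i e` of a multi-index. -/
def mdeg {e : ℕ} (i : Fin e →₀ ℕ) : ℕ := ∑ t, i t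

/-- An `e`-dimensional Hasse–Schmidt derivation on the commutative `k`-algebra `R`:
a `k`-algebra homomorphism `D : R → R⟦X₁,…,X_e⟧` whose composite with evaluation at
`X = 0` (the constant coefficient) is the identity of `R`. -/
structure HSDer (k R : Type*) [CommRing k] [CommRing R] [Algebra k R] (e : ℕ) where
  /-- the underlying `k`-algebra homomorphism `R → R⟦X₁,…,X_e⟧` -/
  toFun : R →ₐ[k] MvPowerSeries (Fin e) R
  constantCoeff_toFun : ∀ r : R, MvPowerSeries.constantCoeff (toFun r) = r

/-- The component `D_i : R → R` of an HS-derivation: `D(r) = ∑ᵢ Dᵢ(r) Xⁱ`. -/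
def HSDer.cmp {k R : Type*} [CommRing k] [CommRing R] [Algebra k R] {e : ℕ}
    (D : HSDer k R e) (i : Fin e →₀ ℕ) (r : R) : R :=
  MvPowerSeries.coeff i (D.toFun r)

/-- The structure constants of a formal group law: `fglC F i j l` is the coefficient of
`Xⁱ Yʲ` in the power series `F₁^{l 1} ⋯ F_e^{l e}`.  (The first `e` variables are the `X`'s,
the last `e` variables are the `Y`'s.) -/
def fglC {k : Type*} [CommRing k] {e : ℕ} (F : Fin e → MvPowerSeries (Fin e ⊕ Fin e) k)
    (i j l : Fin e →₀ ℕ) : k :=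
  MvPowerSeries.coeff (Finsupp.sumElim i j) (∏ t, F t ^ l t)

/-- An `e`-dimensional formal group law over `k`: an `e`-tuple `F = (F₁,…,F_e)` of power
series in `k⟦X₁,…,X_e,Y₁,…,Y_e⟧` with `F(X,0) = X`, `F(0,Y) = Y` and
`F(F(X,Y),Z) = F(X,F(Y,Z))`.  The unit axioms are stated coefficientwise, and the
associativity axiom is stated coefficientwise in terms of the structure constants `fglC`:
the coefficient of `Xᵃ Yᵇ Z^c` on either side of the associativity equation (the displayed
sums are finite on the nose; all further terms vanish since each `F_t` has zero constant
term). -/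
structure FormalGroupLaw (k : Type*) [CommRing k] (e : ℕ) where
  /-- the components `F_t ∈ k⟦X₁,…,X_e,Y₁,…,Y_e⟧` -/
  F : Fin e → MvPowerSeries (Fin e ⊕ Fin e) k
  /-- `F(X, 0) = X` -/
  unit_right : ∀ (t : Fin e) (i : Fin e →₀ ℕ),
    MvPowerSeries.coeff (Finsupp.sumElim i 0) (F t)
      = if i = Finsupp.single t 1 then 1 else 0
  /-- `F(0, Y) = Y` -/
  unit_left : ∀ (t : Fin e) (j : Fin e →₀ ℕ),
    MvPowerSeries.coeff (Finsupp.sumElim 0 j) (F t)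
      = if j = Finsupp.single t 1 then 1 else 0
  /-- associativity `F(F(X,Y),Z) = F(X,F(Y,Z))`, coefficientwise at `Xᵃ Yᵇ Z^c` -/
  assoc : ∀ (t : Fin e) (a b c : Fin e →₀ ℕ),
    ∑ l ∈ Finset.Iic (Finsupp.equivFunOnFinite.symm fun _ => mdeg a + mdeg b),
        fglC F a b l * MvPowerSeries.coeff (Finsupp.sumElim l c) (F t)
      = ∑ l ∈ Finset.Iic (Finsupp.equivFunOnFinite.symm fun _ => mdeg b + mdeg c),
        fglC F b c l * MvPowerSeries.coeff (Finsupp.sumElim a l) (F t)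

/-- `D` is an `F`-derivation for the formal group law `W`: the `F`-iterativity rule
`D_j ∘ D_i = ∑_l c_{i,j}^l D_l` holds, where `c_{i,j}^l = fglC W.F i j l` (the sum is over
all `l` with every entry at most `|i| + |j|`; this includes all `l` with `|l| ≤ |i| + |j|`,
and the structure constants vanish for `|l| > |i| + |j|`). -/
def IsFDer {k R : Type*} [CommRing k] [CommRing R] [Algebra k R] {e : ℕ}
    (W : FormalGroupLaw k e) (D : HSDer k R e) : Prop :=
  ∀ (i j : Fin e →₀ ℕ) (x : R),
    D.cmp j (D.cmp i x)
      = ∑ l ∈ Finset.Iic (Finsupp.equivFunOnFinite.symm fun _ => mdeg i + mdeg j),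
          fglC W.F i j l • D.cmp l x

/-- `(K, D)` is strict: the ring of constants `⋂_{|i| = 1} ker Dᵢ` coincides with
`K^p = {x^p : x ∈ K}`. -/
def IsStrictF {k K : Type*} [CommRing k] [CommRing K] [Algebra k K] {e : ℕ} (p : ℕ)
    (D : HSDer k K e) : Prop :=
  ∀ x : K, (∀ i : Fin e →₀ ℕ, mdeg i = 1 → D.cmp i x = 0) ↔ ∃ y : K, y ^ p = x

/-! With `S⟦X⟧` made an `R`-algebra through `r ↦ D(r)` (coefficients pushed to `S`), the
constant coefficient `S⟦X⟧ → S` is a surjective `R`-algebra map, and extensions of `D` are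
exactly its `R`-algebra sections. Its kernel `(X₁, …, X_e)` is finitely generated, so `S⟦X⟧`
is complete for it; formal étaleness lifts `id_S` uniquely through each nilpotent thickening
`S⟦X⟧ ⧸ (X)ⁿ`, and completeness turns these compatible lifts into a unique section. -/

namespace Algebra.FormallyEtale

variable {R S A B : Type*} [CommRing R] [CommRing S] [CommRing A] [CommRing B]
  [Algebra R S] [Algebra R A] [Algebra R B] [FormallyEtale R S]

theorem existsUnique_mkₐ_comp_eq_of_isAdicComplete (I : Ideal A) [IsAdicComplete I A]
    (f : S →ₐ[R] A ⧸ I) : ∃! g : S →ₐ[R] A, (Ideal.Quotient.mkₐ R I).comp g = f := by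
  obtain ⟨g, hg⟩ := FormallySmooth.exists_mkₐ_comp_eq_of_isAdicComplete f
  refine ⟨g, hg, fun g' hg' => FormallyUnramified.ext_of_iInf I ?_ fun x => ?_⟩
  · simpa using (inferInstance : IsAdicComplete I A).toIsHausdorff.iInf_pow_smul
  · exact (AlgHom.congr_fun hg' x).trans (AlgHom.congr_fun hg x).symm

theorem existsUnique_comp_eq_of_isAdicComplete (π : A →ₐ[R] B) (hπ : Function.Surjective π)
    [IsAdicComplete (RingHom.ker π) A] (f : S →ₐ[R] B) : ∃! g : S →ₐ[R] A, π.comp g = f := by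
  let e := Ideal.quotientKerAlgEquivOfSurjective hπ
  obtain ⟨g, hg, hu⟩ :=
    existsUnique_mkₐ_comp_eq_of_isAdicComplete (RingHom.ker π) ((e.symm : B →ₐ[R] _).comp f)
  refine ⟨g, AlgHom.ext fun x => ?_, fun g' hg' => hu g' (AlgHom.ext fun x => e.injective ?_)⟩
  · simpa [e] using congrArg e (AlgHom.congr_fun hg x)
  · simpa [e] using AlgHom.congr_fun hg' x

end Algebra.FormallyEtale

namespace MvPowerSeries

variable {σ A : Type*} [CommRing A]

theorem mem_span_X_image_of_coeff_eq_zero (T : Finset σ) (f : MvPowerSeries σ A)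
    (hf : ∀ m : σ →₀ ℕ, (∀ s ∈ T, m s = 0) → coeff m f = 0) :
    f ∈ Ideal.span (X '' T) := by
  classical
  induction T using Finset.induction_on generalizing f with
  | empty =>
    rw [show f = 0 from ext fun m => by simpa using hf m]
    exact zero_mem _
  | insert t T _ ih =>
    -- `f₀` keeps the monomials free of `X t`; the rest of `f` is divisible by `X t`.
    let f₀ : MvPowerSeries σ A := fun m => if m t = 0 then coeff m f else 0
    have hf₀ : ∀ m, coeff m f₀ = if m t = 0 then coeff m f else 0 := fun _ => rfl
    have hspan : Ideal.span (X '' T : Set (MvPowerSeries σ A)) ≤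
        Ideal.span (X '' ((insert t T : Finset σ) : Set σ)) :=
      Ideal.span_mono (Set.image_mono (by simp))
    rw [← add_sub_cancel f₀ f]
    refine add_mem (hspan (ih f₀ fun m hm => ?_)) ?_
    · rw [hf₀]
      split_ifs with hmt
      · exact hf m (by simpa [hmt] using hm)
      · rfl
    · obtain ⟨g, hg⟩ : X t ∣ f - f₀ := X_dvd_iff.mpr fun m hm => by simp [hf₀, hm]
      rw [hg]
      exact Ideal.mul_mem_right _ _ (Ideal.subset_span ⟨t, by simp⟩)

theorem ker_constantCoeff [Finite σ] :
    RingHom.ker (constantCoeff : MvPowerSeries σ A →+* A) = Ideal.span (Set.range X) := by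
  have := Fintype.ofFinite σ
  refine le_antisymm (fun f hf => ?_) (Ideal.span_le.mpr ?_)
  · have := mem_span_X_image_of_coeff_eq_zero Finset.univ f fun m hm => by
      rw [show m = 0 from Finsupp.ext fun s => hm s (Finset.mem_univ s),
        coeff_zero_eq_constantCoeff_apply]
      exact hf
    simpa using this
  · rintro _ ⟨s, rfl⟩
    simp

instance [Finite σ] :
    IsAdicComplete (RingHom.ker (constantCoeff : MvPowerSeries σ A →+* A))
      (MvPowerSeries σ A) := by
  rw [ker_constantCoeff]
  infer_instance

variable {R S : Type*} [CommRing R] [CommRing S] [Algebra R S] [Algebra.FormallyEtale R S]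

theorem existsUnique_extension_of_formallyEtale [Finite σ] (ψ : R →+* MvPowerSeries σ S)
    (hψ : constantCoeff.comp ψ = algebraMap R S) :
    ∃! D : S →+* MvPowerSeries σ S,
      D.comp (algebraMap R S) = ψ ∧ constantCoeff.comp D = RingHom.id S := by
  let := ψ.toAlgebra
  let π : MvPowerSeries σ S →ₐ[R] S := { constantCoeff with commutes' := RingHom.congr_fun hψ }
  have : IsAdicComplete (RingHom.ker π) (MvPowerSeries σ S) :=
    inferInstanceAs (IsAdicComplete (RingHom.ker constantCoeff) _)
  obtain ⟨g, hg, hu⟩ := Algebra.FormallyEtale.existsUnique_comp_eq_of_isAdicComplete π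
    (fun s => ⟨C s, constantCoeff_C s⟩) (AlgHom.id R S)
  refine ⟨g, ⟨RingHom.ext g.commutes, congrArg AlgHom.toRingHom hg⟩, ?_⟩
  rintro D ⟨hDψ, hDc⟩
  exact congrArg AlgHom.toRingHom
    (hu { D with commutes' := RingHom.congr_fun hDψ } (AlgHom.ext (RingHom.congr_fun hDc)))

end MvPowerSeries

theorem HSDer.ext {k R : Type*} [CommRing k] [CommRing R] [Algebra k R] {e : ℕ}
    {D₁ D₂ : HSDer k R e} (h : ∀ r, D₁.toFun r = D₂.toFun r) : D₁ = D₂ := by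
  obtain ⟨f₁, _⟩ := D₁
  obtain ⟨f₂, _⟩ := D₂
  congr
  exact AlgHom.ext h

universe u

theorem hsder_extends_uniquely_of_formallyEtale_general
    (e : ℕ)
    (k : Type u) [Field k]
    (R S : Type u) [CommRing R] [CommRing S] [Algebra k R] [Algebra k S]
    [Algebra R S] [IsScalarTower k R S] [Algebra.FormallyEtale R S]
    (D : HSDer k R e) :
    ∃! D' : HSDer k S e,
      ∀ r : R, D'.toFun (algebraMap R S r)
        = MvPowerSeries.map (algebraMap R S) (D.toFun r) := by
  let ψ := (MvPowerSeries.map (algebraMap R S)).comp (D.toFun : R →+* MvPowerSeries (Fin e) R)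
  have hψ : MvPowerSeries.constantCoeff.comp ψ = algebraMap R S := by
    ext r
    simp [ψ, D.constantCoeff_toFun]
  obtain ⟨D', ⟨hD'ψ, hD'c⟩, hu⟩ := MvPowerSeries.existsUnique_extension_of_formallyEtale ψ hψ
  have hk : ∀ c : k, D' (algebraMap k S c) = algebraMap k _ c := fun c => by
    rw [IsScalarTower.algebraMap_apply k R S, ← RingHom.comp_apply, hD'ψ]
    simp [ψ, MvPowerSeries.algebraMap_apply, ← IsScalarTower.algebraMap_apply]
  refine ⟨⟨{ D' with commutes' := hk }, RingHom.congr_fun hD'c⟩, RingHom.congr_fun hD'ψ, ?_⟩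
  intro D'' hD''
  refine HSDer.ext fun s => RingHom.congr_fun (hu (D''.toFun : S →+* _) ⟨?_, ?_⟩) s
  · exact RingHom.ext hD''
  · exact RingHom.ext D''.constantCoeff_toFun

/-- If `R → S` is formally étale, every `e`-dimensional HS-derivation
`D : R → R⟦X₁,…,X_e⟧` on `R` over `k` extends uniquely to `S`. -/
theorem hsder_extends_uniquely_of_formallyEtale
    (p : ℕ) [Fact p.Prime] (e : ℕ) (he : 0 < e)
    (k : Type u) [Field k] [CharP k p] [ExpChar k p] [PerfectRing k p]
    (R S : Type u) [CommRing R] [CommRing S] [Algebra k R] [Algebra k S]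
    [Algebra R S] [IsScalarTower k R S] [Algebra.FormallyEtale R S]
    (D : HSDer k R e) :
    ∃! D' : HSDer k S e,
      ∀ r : R, D'.toFun (algebraMap R S r)
        = MvPowerSeries.map (algebraMap R S) (D.toFun r) :=
  hsder_extends_uniquely_of_formallyEtale_general e k R S D
end
end

section
/- Let φ : R → S be a formally étale homomorphism of commutative k-algebras and let D be an F-derivation on R. Then the unique e-dimensional HS-derivation D' on S extending D (i.e. with D' ∘ φ equal to the composite of D with the coefficientwise map R⟦X⟧ → S⟦X⟧ induced by φ) is again an F-derivation. -/
open scoped TensorProduct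

noncomputable section

/-!
Both `x ↦ ∑ D'ⱼ (D'ᵢ x) XⁱYʲ` and `x ↦ D'(x)(F(X, Y))` are ring homomorphisms `S → S⟦X, Y⟧`, and
the `F`-iterativity rule for `D'` says precisely that they coincide. Since `D` is an
`F`-derivation and `D'` extends `D`, they agree on `R`; both have constant term `x`, so they agree
modulo the ideal of series without constant term, whose powers meet in `0`. Formal
unramifiedness of `R → S` then forces them to be equal.
-/

namespace MvPowerSeries

open Finsupp

variable {σ τ R : Type*} [CommRing R]

theorem le_order_of_mem_ker_constantCoeff_pow {n : ℕ} {f : MvPowerSeries σ R}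
    (hf : f ∈ RingHom.ker (constantCoeff (σ := σ) (R := R)) ^ n) : (n : ℕ∞) ≤ f.order := by
  induction n generalizing f with
  | zero => simp
  | succ n ih =>
    rw [pow_succ] at hf
    refine Submodule.mul_induction_on hf (fun g hg h hh => ?_) (fun g h hg hh => ?_)
    · calc ((n + 1 : ℕ) : ℕ∞) = n + 1 := by norm_cast
        _ ≤ g.order + h.order := add_le_add (ih hg) (one_le_order_iff_constCoeff_eq_zero.mpr hh)
        _ ≤ (g * h).order := le_order_mul
    · exact (le_min hg hh).trans min_order_le_add

theorem iInf_ker_constantCoeff_pow :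
    ⨅ n, RingHom.ker (constantCoeff (σ := σ) (R := R)) ^ n = ⊥ := by
  refine eq_bot_iff.mpr fun f hf => ?_
  rw [Ideal.mem_bot, ← order_eq_top_iff, ENat.eq_top_iff_forall_ge]
  exact fun n => le_order_of_mem_ker_constantCoeff_pow (Ideal.mem_iInf.mp hf n)

theorem ext_sumElim {f g : MvPowerSeries (σ ⊕ τ) R}
    (h : ∀ a b, coeff (sumElim a b) f = coeff (sumElim a b) g) : f = g := by
  ext d
  simpa using h (d.comapDomain Sum.inl Sum.inl_injective.injOn)
    (d.comapDomain Sum.inr Sum.inr_injective.injOn)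

/-- The power-series analogue of `MvPolynomial.iterToSum`. -/
def iterToSum : MvPowerSeries σ (MvPowerSeries τ R) →+* MvPowerSeries (σ ⊕ τ) R where
  toFun g := show MvPowerSeries (σ ⊕ τ) R from fun d =>
    coeff (sumFinsuppAddEquivProdFinsupp d).2 (coeff (sumFinsuppAddEquivProdFinsupp d).1 g)
  map_one' := by
    classical
    refine ext_sumElim fun a b => ?_
    let e := sumFinsuppAddEquivProdFinsupp (α := σ) (β := τ) (M := ℕ)
    change coeff (e (e.symm (a, b))).2 (coeff (e (e.symm (a, b))).1 1) = coeff (e.symm (a, b)) 1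
    simp only [AddEquiv.apply_symm_apply, coeff_one, AddEquivClass.map_eq_zero_iff,
      Prod.mk_eq_zero]
    by_cases ha : a = 0 <;> simp [ha, coeff_one]
  map_mul' g h := by
    classical
    refine ext_sumElim fun a b => ?_
    let e := sumFinsuppAddEquivProdFinsupp (α := σ) (β := τ) (M := ℕ)
    change coeff (e (e.symm (a, b))).2 (coeff (e (e.symm (a, b))).1 (g * h)) =
      coeff (e.symm (a, b)) _
    simp only [AddEquiv.apply_symm_apply, coeff_mul, map_sum, ← Finset.sum_product']
    refine Finset.sum_nbij' (fun x => (e.symm (x.1.1, x.2.1), e.symm (x.1.2, x.2.2)))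
      (fun p => (((e p.1).1, (e p.2).1), ((e p.1).2, (e p.2).2))) ?_ ?_ ?_ ?_ ?_
    · rintro ⟨⟨x₁, x₂⟩, ⟨y₁, y₂⟩⟩ hx
      simp only [Finset.mem_product, Finset.HasAntidiagonal.mem_antidiagonal] at hx ⊢
      rw [← map_add, Prod.mk_add_mk, hx.1, hx.2]
    · rintro ⟨p₁, p₂⟩ hp
      simp only [Finset.mem_product, Finset.HasAntidiagonal.mem_antidiagonal] at hp ⊢
      rw [← Prod.fst_add, ← Prod.snd_add, ← map_add, hp, AddEquiv.apply_symm_apply]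
      simp
    · rintro ⟨⟨x₁, x₂⟩, ⟨y₁, y₂⟩⟩ -
      simp only [AddEquiv.apply_symm_apply]
    · rintro ⟨p₁, p₂⟩ -
      simp only [Prod.mk.eta, AddEquiv.symm_apply_apply]
    · rintro ⟨⟨x₁, x₂⟩, ⟨y₁, y₂⟩⟩ -
      change _ = coeff (e (e.symm (x₁, y₁))).2 (coeff (e (e.symm (x₁, y₁))).1 g) *
        coeff (e (e.symm (x₂, y₂))).2 (coeff (e (e.symm (x₂, y₂))).1 h)
      simp only [AddEquiv.apply_symm_apply]
  map_zero' := rfl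
  map_add' g h := by ext; simp only [map_add]; rfl

@[simp]
theorem coeff_sumElim_iterToSum (g : MvPowerSeries σ (MvPowerSeries τ R)) (a : σ →₀ ℕ)
    (b : τ →₀ ℕ) : coeff (sumElim a b) (iterToSum g) = coeff b (coeff a g) := by
  let e := sumFinsuppAddEquivProdFinsupp (α := σ) (β := τ) (M := ℕ)
  change coeff (e (e.symm (a, b))).2 (coeff (e (e.symm (a, b))).1 g) = _
  rw [AddEquiv.apply_symm_apply]

end MvPowerSeries

theorem Algebra.FormallyUnramified.ringHom_ext_of_iInf {R A B : Type*} [CommRing R]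
    [CommRing A] [CommRing B] [Algebra R A] [Algebra.FormallyUnramified R A] {I : Ideal B}
    (hI : ⨅ n, I ^ n = ⊥) {g₁ g₂ : A →+* B}
    (hR : g₁.comp (algebraMap R A) = g₂.comp (algebraMap R A)) (hmod : ∀ x, g₁ x - g₂ x ∈ I) :
    g₁ = g₂ := by
  let : Algebra R B := (g₁.comp (algebraMap R A)).toAlgebra
  let f₁ : A →ₐ[R] B := { g₁ with commutes' := fun _ => rfl }
  let f₂ : A →ₐ[R] B := { g₂ with commutes' := fun r => (RingHom.congr_fun hR r).symm }
  have : f₁ = f₂ :=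
    Algebra.FormallyUnramified.ext_of_iInf I hI fun x => Ideal.Quotient.eq.mpr (hmod x)
  exact RingHom.ext (AlgHom.congr_fun this)

theorem degree_sumElim {e : ℕ} (i j : Fin e →₀ ℕ) :
    (Finsupp.sumElim i j).degree = mdeg i + mdeg j := by
  simp [Finsupp.degree_eq_sum, Fintype.sum_sum_type, mdeg]

theorem le_equivFunOnFinite_symm_of_mdeg_le {e N : ℕ} {l : Fin e →₀ ℕ} (h : mdeg l ≤ N) :
    l ≤ Finsupp.equivFunOnFinite.symm fun _ => N := fun t =>
  (Finset.single_le_sum (fun _ _ => Nat.zero_le _) (Finset.mem_univ t)).trans h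

theorem fglC_eq_zero_of_lt {k : Type*} [CommRing k] {e : ℕ}
    {F : Fin e → MvPowerSeries (Fin e ⊕ Fin e) k} (hF : ∀ t, MvPowerSeries.constantCoeff (F t) = 0)
    {i j l : Fin e →₀ ℕ} (h : mdeg i + mdeg j < mdeg l) : fglC F i j l = 0 := by
  refine MvPowerSeries.coeff_of_lt_order ?_
  calc ((Finsupp.sumElim i j).degree : ℕ∞) < mdeg l := by rw [degree_sumElim]; exact_mod_cast h
    _ = ∑ t, ((l t : ℕ) : ℕ∞) := by simp [mdeg]
    _ ≤ ∑ t, (F t ^ l t).order :=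
      Finset.sum_le_sum fun t _ => MvPowerSeries.le_order_pow_of_constantCoeff_eq_zero _ (hF t)
    _ ≤ (∏ t, F t ^ l t).order := MvPowerSeries.le_order_prod _ _

namespace FormalGroupLaw

variable {k : Type*} [CommRing k] {e : ℕ}

theorem constantCoeff_F (W : FormalGroupLaw k e) (t : Fin e) :
    MvPowerSeries.constantCoeff (W.F t) = 0 := by
  have h := W.unit_right t 0
  rw [Finsupp.sumElim_zero_zero, MvPowerSeries.coeff_zero_eq_constantCoeff_apply] at h
  rw [h, if_neg]
  intro h0
  simpa using DFunLike.congr_fun h0 t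

theorem hasSubst_map_F (W : FormalGroupLaw k e) (A : Type*) [CommRing A] [Algebra k A] :
    MvPowerSeries.HasSubst fun t => MvPowerSeries.map (algebraMap k A) (W.F t) :=
  MvPowerSeries.hasSubst_of_constantCoeff_zero fun t => by
    rw [← MvPowerSeries.coeff_zero_eq_constantCoeff_apply, MvPowerSeries.coeff_map,
      MvPowerSeries.coeff_zero_eq_constantCoeff_apply, W.constantCoeff_F, map_zero]

end FormalGroupLaw

namespace HSDer

open MvPowerSeries Finsupp

variable {k A : Type*} [CommRing k] [CommRing A] [Algebra k A] {e : ℕ}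

theorem cmp_zero (D : HSDer k A e) (x : A) : D.cmp 0 x = x := by
  rw [cmp, coeff_zero_eq_constantCoeff_apply, D.constantCoeff_toFun]

def iterate (D : HSDer k A e) : A →+* MvPowerSeries (Fin e ⊕ Fin e) A :=
  iterToSum.comp ((map D.toFun.toRingHom).comp D.toFun.toRingHom)

def substFGL (W : FormalGroupLaw k e) (D : HSDer k A e) : A →+* MvPowerSeries (Fin e ⊕ Fin e) A :=
  (substAlgHom (W.hasSubst_map_F A)).toRingHom.comp D.toFun.toRingHom

theorem coeff_iterate (D : HSDer k A e) (i j : Fin e →₀ ℕ) (x : A) :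
    coeff (sumElim i j) (D.iterate x) = D.cmp j (D.cmp i x) := by
  simp [iterate, cmp, coeff_map]

theorem coeff_substFGL (W : FormalGroupLaw k e) (D : HSDer k A e) (i j : Fin e →₀ ℕ) (x : A) :
    coeff (sumElim i j) (D.substFGL W x)
      = ∑ l ∈ Finset.Iic (equivFunOnFinite.symm fun _ => mdeg i + mdeg j),
          fglC W.F i j l • D.cmp l x := by
  have hterm : ∀ l : Fin e →₀ ℕ, coeff l (D.toFun x) • coeff (sumElim i j)
      (l.prod fun t n => map (algebraMap k A) (W.F t) ^ n) = fglC W.F i j l • D.cmp l x := by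
    intro l
    rw [prod_fintype _ _ (fun _ => pow_zero _)]
    simp only [← map_pow, ← map_prod, coeff_map, Algebra.smul_def, mul_comm]
    rfl
  rw [substFGL, RingHom.comp_apply, AlgHom.toRingHom_eq_coe, RingHom.coe_coe,
    coe_substAlgHom, coeff_subst (W.hasSubst_map_F A)]
  refine (finsum_congr hterm).trans ?_
  refine finsum_eq_sum_of_support_subset _ fun l hl => Finset.mem_Iic.mpr ?_
  refine le_equivFunOnFinite_symm_of_mdeg_le (not_lt.mp fun hlt => hl ?_)
  simp [fglC_eq_zero_of_lt W.constantCoeff_F hlt]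

theorem constantCoeff_iterate (D : HSDer k A e) (x : A) : constantCoeff (D.iterate x) = x := by
  rw [← coeff_zero_eq_constantCoeff_apply, ← sumElim_zero_zero, coeff_iterate, cmp_zero, cmp_zero]

theorem constantCoeff_substFGL (W : FormalGroupLaw k e) (D : HSDer k A e) (x : A) :
    constantCoeff (D.substFGL W x) = x := by
  rw [← coeff_zero_eq_constantCoeff_apply, ← sumElim_zero_zero, coeff_substFGL]
  have hbox : (equivFunOnFinite.symm fun _ : Fin e =>
      mdeg (0 : Fin e →₀ ℕ) + mdeg (0 : Fin e →₀ ℕ)) = 0 := by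
    ext; simp [mdeg]
  rw [hbox, ← bot_eq_zero, Finset.Iic_bot, Finset.sum_singleton, bot_eq_zero]
  simp [fglC, cmp_zero]

theorem isFDer_iff_iterate_eq_substFGL (W : FormalGroupLaw k e) (D : HSDer k A e) :
    IsFDer W D ↔ D.iterate = D.substFGL W := by
  refine ⟨fun hD => RingHom.ext fun x => ext_sumElim fun i j => ?_, fun h i j x => ?_⟩
  · rw [coeff_iterate, coeff_substFGL, hD]
  · rw [← coeff_iterate, h, coeff_substFGL]

variable {R S : Type*} [CommRing R] [CommRing S] [Algebra k R] [Algebra k S] [Algebra R S]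
  {D : HSDer k R e} {D' : HSDer k S e}

theorem cmp_algebraMap (hext : ∀ r : R, D'.toFun (algebraMap R S r)
    = map (algebraMap R S) (D.toFun r)) (l : Fin e →₀ ℕ) (r : R) :
    D'.cmp l (algebraMap R S r) = algebraMap R S (D.cmp l r) := by
  rw [cmp, hext, coeff_map, cmp]

theorem iterate_algebraMap (hext : ∀ r : R, D'.toFun (algebraMap R S r)
    = map (algebraMap R S) (D.toFun r)) (r : R) :
    D'.iterate (algebraMap R S r) = map (algebraMap R S) (D.iterate r) :=
  ext_sumElim fun i j => by
    rw [coeff_iterate, coeff_map, coeff_iterate, cmp_algebraMap hext, cmp_algebraMap hext]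

theorem substFGL_algebraMap [IsScalarTower k R S] (W : FormalGroupLaw k e)
    (hext : ∀ r : R, D'.toFun (algebraMap R S r) = map (algebraMap R S) (D.toFun r)) (r : R) :
    D'.substFGL W (algebraMap R S r) = map (algebraMap R S) (D.substFGL W r) :=
  ext_sumElim fun i j => by
    simp only [coeff_substFGL, coeff_map, map_sum, cmp_algebraMap hext]
    exact Finset.sum_congr rfl fun l _ => (map_smul (IsScalarTower.toAlgHom k R S) _ _).symm

end HSDer

universe u

theorem fder_extension_of_formallyEtale_general
    (e : ℕ)
    (k : Type u) [Field k]
    (R S : Type u) [CommRing R] [CommRing S] [Algebra k R] [Algebra k S]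
    [Algebra R S] [IsScalarTower k R S] [Algebra.FormallyEtale R S]
    (W : FormalGroupLaw k e)
    (D : HSDer k R e) (hD : IsFDer W D) :
    ∀ D' : HSDer k S e,
      (∀ r : R, D'.toFun (algebraMap R S r)
        = MvPowerSeries.map (algebraMap R S) (D.toFun r)) →
      IsFDer W D' := by
  intro D' hext
  rw [HSDer.isFDer_iff_iterate_eq_substFGL] at hD ⊢
  refine Algebra.FormallyUnramified.ringHom_ext_of_iInf (R := R)
    MvPowerSeries.iInf_ker_constantCoeff_pow (RingHom.ext fun r => ?_) fun x => ?_
  · simp only [RingHom.comp_apply, HSDer.iterate_algebraMap hext,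
      HSDer.substFGL_algebraMap W hext, hD]
  · rw [RingHom.mem_ker, map_sub, HSDer.constantCoeff_iterate, HSDer.constantCoeff_substFGL,
      sub_self]

/-- If `R → S` is formally étale and `D` is an `F`-derivation on `R`, then
the unique `e`-dimensional HS-derivation on `S` extending `D` is again an `F`-derivation. -/
theorem fder_extension_of_formallyEtale
    (p : ℕ) [Fact p.Prime] (e : ℕ) (he : 0 < e)
    (k : Type u) [Field k] [CharP k p] [ExpChar k p] [PerfectRing k p]
    (R S : Type u) [CommRing R] [CommRing S] [Algebra k R] [Algebra k S]
    [Algebra R S] [IsScalarTower k R S] [Algebra.FormallyEtale R S]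
    (W : FormalGroupLaw k e)
    (D : HSDer k R e) (hD : IsFDer W D) :
    ∀ D' : HSDer k S e,
      (∀ r : R, D'.toFun (algebraMap R S r)
        = MvPowerSeries.map (algebraMap R S) (D.toFun r)) →
      IsFDer W D' :=
  fder_extension_of_formallyEtale_general e k R S W D hD
end
end

section
/- Let F be an e-dimensional formal group law over k, let R = k⟦X_1,…,X_e⟧, and let D^F : R → k⟦X_1,…,X_e,Y_1,…,Y_e⟧ be the canonical F-derivation, sending f to the substitution f(F_1,…,F_e). Then (R,D^F) is strict: for f ∈ R, the coefficient of Y_t in the Y-expansion of f(F(X,Y)) (an element of k⟦X_1,…,X_e⟧) vanishes for every t = 1,…,e if and only if f is a p-th power in R. -/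
open scoped TensorProduct

noncomputable section

/-- The coefficient at the monomial with multi-index `q` (over `Fin e ⊕ Fin e`: the first
block are the `X`-variables, the second block the `Y`-variables) of the substitution
`f(F(X,Y)) ∈ k⟦X₁,…,X_e,Y₁,…,Y_e⟧` of the components of a formal group law `F` into
`f ∈ k⟦X₁,…,X_e⟧`.  The displayed sum is finite and equals the full (a priori infinite)
sum `∑_d (coeff d f) · coeff q (F₁^{d 1} ⋯ F_e^{d e})`, since every term with
`|d| > |q|` vanishes (each `F_t` having zero constant term). -/
def substCoeff {k : Type*} [CommRing k] {e : ℕ} (F : Fin e → MvPowerSeries (Fin e ⊕ Fin e) k)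
    (f : MvPowerSeries (Fin e) k) (q : Fin e ⊕ Fin e →₀ ℕ) : k :=
  ∑ d ∈ Finset.Iic (Finsupp.equivFunOnFinite.symm fun _ => ∑ s, q s),
    MvPowerSeries.coeff d f * MvPowerSeries.coeff q (∏ t, F t ^ d t)

/-! The `Yₜ`-coefficient of `f(F(X,Y))` is, by the chain rule and `F(X,0) = X`,
`∑ₛ (∂f/∂Xₛ) · (∂Fₛ/∂Yₜ)(X,0)`. The Jacobian `((∂Fₛ/∂Yₜ)(X,0))` has constant term the identity
matrix because `F(0,Y) = Y`, so it is invertible, and the constants of `D^F` are exactly the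
series all of whose partial derivatives vanish. In characteristic `p` these are the series
supported on exponents divisible by `p`, which over a perfect field are the `p`-th powers.
The chain rule is proved for polynomials and transferred to power series by truncation, which is
also how `substCoeff` is defined. -/

open Finset MvPowerSeries

theorem Finsupp.sumElim_inj {α β γ : Type*} [Zero γ] {a c : α →₀ γ} {b d : β →₀ γ} :
    a.sumElim b = c.sumElim d ↔ a = c ∧ b = d :=
  (sumFinsuppEquivProdFinsupp.symm.injective.eq_iff (a := (a, b)) (b := (c, d))).trans Prod.ext_iff

namespace MvPowerSeries

section CoeffRight

variable {σ τ R : Type*} [CommSemiring R]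

/-- The coefficient of `Yʲ` in `g ∈ R⟦X, Y⟧`, as a power series in `X`. -/
def coeffRight (j : τ →₀ ℕ) (g : MvPowerSeries (σ ⊕ τ) R) : MvPowerSeries σ R :=
  fun n => coeff (n.sumElim j) g

theorem coeff_coeffRight (j : τ →₀ ℕ) (n : σ →₀ ℕ) (g : MvPowerSeries (σ ⊕ τ) R) :
    coeff n (coeffRight j g) = coeff (n.sumElim j) g := rfl

theorem coeffRight_add (j : τ →₀ ℕ) (A B : MvPowerSeries (σ ⊕ τ) R) :
    coeffRight j (A + B) = coeffRight j A + coeffRight j B := rfl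

theorem coeffRight_zero_C (a : R) :
    coeffRight (0 : τ →₀ ℕ) (C a : MvPowerSeries (σ ⊕ τ) R) = C a := by
  classical
  ext n
  simp [coeff_coeffRight, coeff_C, ← Finsupp.sumElim_zero_zero, Finsupp.sumElim_inj]

theorem coeffRight_single_C (t : τ) (a : R) :
    coeffRight (Finsupp.single t 1) (C a : MvPowerSeries (σ ⊕ τ) R) = 0 := by
  classical
  ext n
  simp [coeff_coeffRight, coeff_C, ← Finsupp.sumElim_zero_zero, Finsupp.sumElim_inj]

theorem coeffRight_mul [DecidableEq σ] [DecidableEq τ] (j : τ →₀ ℕ)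
    (A B : MvPowerSeries (σ ⊕ τ) R) :
    coeffRight j (A * B) = ∑ x ∈ antidiagonal j, coeffRight x.1 A * coeffRight x.2 B := by
  ext n
  have hinj : Set.InjOn (fun x : ((σ →₀ ℕ) × (σ →₀ ℕ)) × ((τ →₀ ℕ) × (τ →₀ ℕ)) =>
      (x.1.1.sumElim x.2.1, x.1.2.sumElim x.2.2)) ↑(antidiagonal n ×ˢ antidiagonal j) := by
    rintro ⟨⟨a, b⟩, c, d⟩ - ⟨⟨a', b'⟩, c', d'⟩ - h
    simp_all [Finsupp.sumElim_inj]
  rw [coeff_coeffRight, coeff_mul, ← Finsupp.image_sumElim_product_antidiagonal, sum_image hinj,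
    map_sum, sum_product_right]
  simp only [coeff_mul, coeff_coeffRight]

theorem coeffRight_zero_mul (A B : MvPowerSeries (σ ⊕ τ) R) :
    coeffRight 0 (A * B) = coeffRight 0 A * coeffRight 0 B := by
  classical
  rw [coeffRight_mul, Finsupp.antidiagonal_zero, sum_singleton]

theorem coeffRight_single_mul (t : τ) (A B : MvPowerSeries (σ ⊕ τ) R) :
    coeffRight (Finsupp.single t 1) (A * B) =
      coeffRight 0 A * coeffRight (Finsupp.single t 1) B +
        coeffRight (Finsupp.single t 1) A * coeffRight 0 B := by
  classical
  rw [coeffRight_mul, Finsupp.antidiagonal_single]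
  simp [Finset.Nat.antidiagonal_succ]

variable (F : σ → MvPowerSeries (σ ⊕ τ) R) (hF : ∀ s, coeffRight 0 (F s) = X s)
include hF

theorem coeffRight_zero_aeval (P : MvPolynomial σ R) :
    coeffRight 0 (MvPolynomial.aeval F P) = P := by
  induction P using MvPolynomial.induction_on with
  | C a => rw [MvPolynomial.aeval_C, ← c_eq_algebraMap, coeffRight_zero_C, MvPolynomial.coe_C]
  | add P Q hP hQ => rw [map_add, coeffRight_add, hP, hQ, MvPolynomial.coe_add]
  | mul_X P s hP =>
    rw [map_mul, coeffRight_zero_mul, hP, MvPolynomial.aeval_X, hF, MvPolynomial.coe_mul,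
      MvPolynomial.coe_X]

theorem coeffRight_single_aeval [Fintype σ] (t : τ) (P : MvPolynomial σ R) :
    coeffRight (Finsupp.single t 1) (MvPolynomial.aeval F P) =
      ∑ s, pderiv R s (P : MvPowerSeries σ R) * coeffRight (Finsupp.single t 1) (F s) := by
  classical
  induction P using MvPolynomial.induction_on with
  | C a =>
    rw [MvPolynomial.aeval_C, ← c_eq_algebraMap, coeffRight_single_C, MvPolynomial.coe_C]
    simp only [pderiv_C, zero_mul, sum_const_zero]
  | add P Q hP hQ =>
    simp only [map_add, coeffRight_add, hP, hQ, MvPolynomial.coe_add, add_mul, sum_add_distrib]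
  | mul_X P i hP =>
    rw [map_mul, coeffRight_single_mul, hP, coeffRight_zero_aeval F hF, MvPolynomial.aeval_X, hF]
    simp only [MvPolynomial.coe_mul, MvPolynomial.coe_X, Derivation.leibniz, smul_eq_mul, pderiv_X,
      add_mul, sum_add_distrib, Pi.single_apply, mul_ite, mul_one, mul_zero, ite_mul, zero_mul,
      sum_ite_eq, mem_univ, if_true, sum_mul]
    exact congrArg _ (sum_congr rfl fun s _ => by ring)

end CoeffRight

section Truncation

variable {σ R : Type*} [CommSemiring R]

theorem coeff_mul_congr_left {A A' : MvPowerSeries σ R} (B : MvPowerSeries σ R) {n : σ →₀ ℕ}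
    (h : ∀ m ≤ n, coeff m A = coeff m A') : coeff n (A * B) = coeff n (A' * B) := by
  classical
  rw [coeff_mul, coeff_mul]
  exact sum_congr rfl fun x hx => by rw [h x.1 (HasAntidiagonal.antidiagonal.fst_le hx)]

theorem coeff_pderiv_trunc' [DecidableEq σ] {N m : σ →₀ ℕ} {i : σ}
    (h : m + Finsupp.single i 1 ≤ N) (f : MvPowerSeries σ R) :
    coeff m (pderiv R i (trunc' R N f : MvPowerSeries σ R)) = coeff m (pderiv R i f) := by
  rw [coeff_pderiv, coeff_pderiv, MvPolynomial.coeff_coe, coeff_trunc', if_pos h]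

end Truncation

section CharP

variable {σ k : Type*}

def contract [Semiring k] (p : ℕ) (f : MvPowerSeries σ k) : MvPowerSeries σ k :=
  fun m => coeff (p • m) f

theorem coeff_contract [Semiring k] (p : ℕ) (f : MvPowerSeries σ k) (m : σ →₀ ℕ) :
    coeff m (contract p f) = coeff (p • m) f := rfl

theorem pderiv_pow_char [CommSemiring k] (p : ℕ) [CharP k p] (g : MvPowerSeries σ k) (i : σ) :
    pderiv k i (g ^ p) = 0 := by
  rw [pderiv_pow, ← map_natCast C, CharP.cast_eq_zero, map_zero, zero_mul, zero_mul]

variable [CommRing k] [NoZeroDivisors k] (p : ℕ) [CharP k p]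

theorem coeff_eq_zero_of_forall_pderiv_eq_zero {f : MvPowerSeries σ k}
    (hf : ∀ i, pderiv k i f = 0) {n : σ →₀ ℕ} {i : σ} (hi : ¬ p ∣ n i) : coeff n f = 0 := by
  have hni : n i ≠ 0 := by rintro h; simp [h] at hi
  obtain ⟨m, rfl⟩ : ∃ m, n = m + Finsupp.single i 1 :=
    ⟨n - Finsupp.single i 1, (tsub_add_cancel_of_le (Finsupp.single_le_iff.2 (by omega))).symm⟩
  have h := congrArg (coeff m) (hf i)
  rw [coeff_pderiv, map_zero] at h
  refine (mul_eq_zero.1 h).resolve_right ?_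
  exact_mod_cast mt (CharP.cast_eq_zero_iff k p (m i + 1)).1 (by simpa using hi)

theorem eq_expand_contract_of_forall_pderiv_eq_zero (hp : p ≠ 0) {f : MvPowerSeries σ k}
    (hf : ∀ i, pderiv k i f = 0) : f = expand p hp (contract p f) := by
  ext n
  by_cases h : ∀ i, p ∣ n i
  · obtain ⟨m, rfl⟩ : ∃ m, p • m = n := ⟨n.mapRange (· / p) (Nat.zero_div p),
      Finsupp.ext fun i => by simp [Nat.mul_div_cancel' (h i)]⟩
    rw [coeff_expand_smul, coeff_contract]
  · push Not at h
    obtain ⟨i, hi⟩ := h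
    rw [coeff_expand_of_not_dvd p hp _ hi, coeff_eq_zero_of_forall_pderiv_eq_zero p hf hi]

theorem exists_pow_eq_iff_forall_pderiv_eq_zero [Fact p.Prime] [PerfectRing k p]
    (f : MvPowerSeries σ k) : (∃ g, g ^ p = f) ↔ ∀ i, pderiv k i f = 0 := by
  refine ⟨fun ⟨g, hg⟩ i => hg ▸ pderiv_pow_char p g i, fun hf => ?_⟩
  have hp : p ≠ 0 := (Fact.out : p.Prime).ne_zero
  have hroot : map (frobenius k p) (map (frobeniusEquiv k p).symm (contract p f)) =
      contract p f := by
    ext m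
    simp
  refine ⟨map (frobeniusEquiv k p).symm (contract p f), ?_⟩
  rw [← map_frobenius_expand p hp, map_expand, hroot,
    ← eq_expand_contract_of_forall_pderiv_eq_zero p hp hf]

end CharP

end MvPowerSeries

theorem Matrix.isUnit_iff_isUnit_map_constantCoeff {ι σ R : Type*} [Fintype ι] [DecidableEq ι]
    [CommRing R] (M : Matrix ι ι (MvPowerSeries σ R)) :
    IsUnit M ↔ IsUnit (M.map constantCoeff) := by
  rw [isUnit_iff_isUnit_det, isUnit_iff_constantCoeff, RingHom.map_det, ← isUnit_iff_isUnit_det]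
  rfl

section SubstCoeff

variable {k : Type*} [CommRing k] {e : ℕ}

theorem substCoeff_eq_coeff_aeval_trunc' (F : Fin e → MvPowerSeries (Fin e ⊕ Fin e) k)
    (f : MvPowerSeries (Fin e) k) (q : Fin e ⊕ Fin e →₀ ℕ) :
    substCoeff F f q = coeff q (MvPolynomial.aeval F
      (trunc' k (Finsupp.equivFunOnFinite.symm fun _ => ∑ s, q s) f)) := by
  rw [substCoeff, trunc', truncFinset_apply, map_sum, map_sum]
  refine sum_congr rfl fun d _ => ?_
  rw [MvPolynomial.aeval_monomial, ← c_eq_algebraMap, coeff_C_mul,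
    Finsupp.prod_fintype _ _ fun _ => pow_zero _]

theorem substCoeff_sumElim_single (F : Fin e → MvPowerSeries (Fin e ⊕ Fin e) k)
    (hF : ∀ s, coeffRight 0 (F s) = X s) (f : MvPowerSeries (Fin e) k) (n : Fin e →₀ ℕ)
    (t : Fin e) :
    substCoeff F f (n.sumElim (Finsupp.single t 1)) =
      coeff n (∑ s, pderiv k s f * coeffRight (Finsupp.single t 1) (F s)) := by
  rw [substCoeff_eq_coeff_aeval_trunc', ← coeff_coeffRight, coeffRight_single_aeval F hF,
    map_sum, map_sum]
  refine sum_congr rfl fun s _ => coeff_mul_congr_left _ fun m hm => coeff_pderiv_trunc' ?_ f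
  intro v
  have hnv : n v ≤ ∑ u, n u := single_le_sum (fun _ _ => Nat.zero_le _) (mem_univ v)
  have hsv : Finsupp.single s 1 v ≤ 1 := by
    rw [Finsupp.single_apply]
    split_ifs <;> omega
  have hmv := hm v
  simp only [Finsupp.coe_add, Pi.add_apply, Finsupp.coe_sumElim, Fintype.sum_sum_type,
    Sum.elim_inl, Sum.elim_inr, Finsupp.univ_sum_single_apply,
    Finsupp.equivFunOnFinite_symm_apply_apply]
  omega

end SubstCoeff

namespace FormalGroupLaw

variable {k : Type*} [CommRing k] {e : ℕ} (W : FormalGroupLaw k e)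

/-- `W.jacobianY s t = (∂Fₛ/∂Yₜ)(X, 0)`. -/
def jacobianY : Matrix (Fin e) (Fin e) (MvPowerSeries (Fin e) k) :=
  Matrix.of fun s t => coeffRight (Finsupp.single t 1) (W.F s)

theorem coeffRight_zero_F (s : Fin e) : coeffRight 0 (W.F s) = X s := by
  ext n
  rw [coeff_coeffRight, W.unit_right, coeff_X]

theorem map_constantCoeff_jacobianY : W.jacobianY.map constantCoeff = 1 := by
  ext s t
  rw [Matrix.map_apply, jacobianY, Matrix.of_apply, ← coeff_zero_eq_constantCoeff_apply,
    coeff_coeffRight, W.unit_left, Matrix.one_apply]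
  exact if_congr ((Finsupp.single_left_inj one_ne_zero).trans eq_comm) rfl rfl

theorem isUnit_jacobianY : IsUnit W.jacobianY := by
  rw [Matrix.isUnit_iff_isUnit_map_constantCoeff, map_constantCoeff_jacobianY]
  exact isUnit_one

end FormalGroupLaw

universe u

theorem canonical_fderivation_strict_general
    (p : ℕ) [Fact p.Prime] (e : ℕ)
    (k : Type u) [Field k] [CharP k p] [ExpChar k p] [PerfectRing k p]
    (W : FormalGroupLaw k e) (f : MvPowerSeries (Fin e) k) :
    (∀ (t : Fin e) (n : Fin e →₀ ℕ),
        substCoeff W.F f (Finsupp.sumElim n (Finsupp.single t 1)) = 0)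
      ↔ ∃ g : MvPowerSeries (Fin e) k, g ^ p = f := by
  have hJ := Matrix.vecMul_injective_of_isUnit W.isUnit_jacobianY
  calc _ ↔ Matrix.vecMul (fun s => pderiv k s f) W.jacobianY = 0 := by
        simp only [substCoeff_sumElim_single W.F W.coeffRight_zero_F, FormalGroupLaw.jacobianY,
          Matrix.vecMul, dotProduct, Matrix.of_apply, funext_iff, MvPowerSeries.ext_iff, map_sum,
          Pi.zero_apply, coeff_zero]
    _ ↔ ∀ s, pderiv k s f = 0 := by
        rw [hJ.eq_iff' (Matrix.zero_vecMul _)]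
        exact funext_iff
    _ ↔ _ := (exists_pow_eq_iff_forall_pderiv_eq_zero p f).symm

/-- The canonical `F`-derivation `D^F : f ↦ f(F(X,Y))` on
`R = k⟦X₁,…,X_e⟧` is strict: the coefficient of `Y_t` in the `Y`-expansion of `f(F(X,Y))`
vanishes for every `t` iff `f` is a `p`-th power in `R`. -/
theorem canonical_fderivation_strict
    (p : ℕ) [Fact p.Prime] (e : ℕ) (he : 0 < e)
    (k : Type u) [Field k] [CharP k p] [ExpChar k p] [PerfectRing k p]
    (W : FormalGroupLaw k e) (f : MvPowerSeries (Fin e) k) :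
    (∀ (t : Fin e) (n : Fin e →₀ ℕ),
        substCoeff W.F f (Finsupp.sumElim n (Finsupp.single t 1)) = 0)
      ↔ ∃ g : MvPowerSeries (Fin e) k, g ^ p = f :=
  canonical_fderivation_strict_general p e k W f
end
end
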